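/- arXiv:1305.5418 — 2 statements merged into one kernel-verified Lean document; each statement's English description precedes it below -/
import Mathlib

section
/- Let α ∈ (0,2), 0 < s < 1 with β := α + 1 - 1/s > 0, and let μ_cusp(0, dz) = 1_{{|z₂| > |z₁|^s}}(z) |z|^{-2-α} dz on ℝ². Then there exists Λ ≥ 1 (depending on α, s) such that for all 0 < ρ ≤ 1: ρ^{-2} ∫_{|z|≤ρ} |z|² μ_cusp(0, dz) + ∫_{ρ<|z|≤1} μ_cusp(0, dz) ≤ Λ ρ^{-β}. -/
open MeasureTheory

/-- The cusp measure on `ℝ²`: restriction of the `α`-stable measure `|z|^{-2-α} dz`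
to the cusp region `{|z₂| > |z₁|^s}`. -/
noncomputable def muCusp (α s : ℝ) : Measure (EuclideanSpace ℝ (Fin 2)) :=
  (volume : Measure (EuclideanSpace ℝ (Fin 2))).withDensity fun z =>
    Set.indicator {z : EuclideanSpace ℝ (Fin 2) | |z 0| ^ s < |z 1|}
      (fun z => ENNReal.ofReal (‖z‖ ^ (-(2 : ℝ) - α))) z

/-!
The horizontal slice of the cusp at height `z₂ = y` is `|z₁| < |y|^{1/s}`, of length `2|y|^{1/s}`.
On the cusp `|z₂| ≤ |z|`, and inside the unit ball also `|z| < 2|z₂|` (there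
`|z₁| ≤ |z₁|^s < |z₂|`). So the density can be bounded by a power of `|z₂|` and both terms become
one-dimensional integrals: `∫_{|y| ≤ ρ} |y|^{1/s - α} dy ≈ ρ^{2-β}` and
`∫_{|y| > ρ/2} |y|^{1/s - 2 - α} dy ≈ ρ^{-β}`; the first converges since `β < 2`, the second
since `β > 0`.
-/

open Set ENNReal

theorem lintegral_comp_abs_eq_two_mul (G : ℝ → ℝ≥0∞) :
    ∫⁻ x, G |x| = 2 * ∫⁻ x in Ioi 0, G x := by
  have hpos : ∫⁻ x in Ioi 0, G |x| = ∫⁻ x in Ioi 0, G x :=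
    setLIntegral_congr_fun measurableSet_Ioi fun x hx => by rw [abs_of_pos hx]
  have hneg : ∫⁻ x in (Ioi 0)ᶜ, G |x| = ∫⁻ x in Ioi 0, G x := by
    rw [compl_Ioi, ← hpos, setLIntegral_congr Ioi_ae_eq_Ici]
    simpa using
      (Measure.measurePreserving_neg (volume : Measure ℝ)).setLIntegral_comp_preimage_emb
        (Homeomorph.neg ℝ).measurableEmbedding (fun x => G |x|) (Ici 0)
  rw [← lintegral_add_compl _ measurableSet_Ioi, hpos, hneg, two_mul]

theorem lintegral_Ioc_rpow {p c : ℝ} (hp : -1 < p) (hc : 0 ≤ c) :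
    ∫⁻ t in Ioc 0 c, ENNReal.ofReal (t ^ p) = ENNReal.ofReal (c ^ (p + 1) / (p + 1)) := by
  have hint : IntegrableOn (fun t : ℝ => t ^ p) (Ioc 0 c) :=
    (intervalIntegrable_iff_integrableOn_Ioc_of_le hc).mp
      (intervalIntegral.intervalIntegrable_rpow' hp)
  rw [← ofReal_integral_eq_lintegral_ofReal hint, ← intervalIntegral.integral_of_le hc,
    integral_rpow (Or.inl hp), Real.zero_rpow (by linarith), sub_zero]
  filter_upwards [ae_restrict_mem measurableSet_Ioc] with t ht using Real.rpow_nonneg ht.1.le p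

theorem lintegral_Ioi_rpow {p c : ℝ} (hp : p < -1) (hc : 0 < c) :
    ∫⁻ t in Ioi c, ENNReal.ofReal (t ^ p) = ENNReal.ofReal (-c ^ (p + 1) / (p + 1)) := by
  rw [← ofReal_integral_eq_lintegral_ofReal (integrableOn_Ioi_rpow_of_lt hp hc),
    integral_Ioi_rpow_of_lt hp hc]
  filter_upwards [ae_restrict_mem measurableSet_Ioi] with t ht
    using Real.rpow_nonneg (hc.trans ht).le p

theorem volume_abs_rpow_lt {s : ℝ} (hs : 0 < s) {t : ℝ} (ht : 0 ≤ t) :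
    volume {x : ℝ | |x| ^ s < t} = ENNReal.ofReal (2 * t ^ s⁻¹) := by
  have : {x : ℝ | |x| ^ s < t} = Metric.ball 0 (t ^ s⁻¹) := by
    ext x
    rw [mem_ofPred_eq, Metric.mem_ball, dist_zero_right, Real.norm_eq_abs,
      Real.lt_rpow_inv_iff_of_pos (abs_nonneg x) ht hs]
  rw [this, Real.volume_ball]

theorem abs_apply_le_norm {ι : Type*} [Fintype ι] (z : EuclideanSpace ℝ ι) (i : ι) :
    |z i| ≤ ‖z‖ :=
  PiLp.norm_apply_le z i

theorem norm_le_abs_add_abs (z : EuclideanSpace ℝ (Fin 2)) : ‖z‖ ≤ |z 0| + |z 1| := by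
  have hsq : ‖z‖ ^ 2 ≤ (|z 0| + |z 1|) ^ 2 := by
    rw [EuclideanSpace.real_norm_sq_eq, Fin.sum_univ_two, add_sq, sq_abs, sq_abs]
    nlinarith [abs_nonneg (z 0), abs_nonneg (z 1)]
  exact le_of_sq_le_sq hsq (by positivity)

def cuspSet (s : ℝ) : Set (EuclideanSpace ℝ (Fin 2)) := {z | |z 0| ^ s < |z 1|}

theorem measurableSet_cuspSet (s : ℝ) : MeasurableSet (cuspSet s) :=
  measurableSet_lt (by fun_prop) (by fun_prop)

theorem abs_apply_one_pos_of_mem_cuspSet {s : ℝ} {z : EuclideanSpace ℝ (Fin 2)}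
    (hz : z ∈ cuspSet s) : 0 < |z 1| :=
  (Real.rpow_nonneg (abs_nonneg _) s).trans_lt hz

theorem norm_lt_two_mul_abs_of_mem_cuspSet {s : ℝ} (hs : s ≤ 1) {z : EuclideanSpace ℝ (Fin 2)}
    (hz : z ∈ cuspSet s) (hz1 : ‖z‖ ≤ 1) : ‖z‖ < 2 * |z 1| := by
  have h0 : |z 0| < |z 1| :=
    (Real.self_le_rpow_of_le_one (abs_nonneg _) ((abs_apply_le_norm z 0).trans hz1) hs).trans_lt hz
  linarith [norm_le_abs_add_abs z]

theorem setLIntegral_cuspSet_comp_abs {s : ℝ} (hs : 0 < s) {F : ℝ → ℝ≥0∞} (hF : Measurable F) :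
    ∫⁻ z in cuspSet s, F |z 1| = 4 * ∫⁻ t in Ioi 0, F t * ENNReal.ofReal (t ^ s⁻¹) := by
  have hcoord : MeasurePreserving (fun z : EuclideanSpace ℝ (Fin 2) => (z 0, z 1)) :=
    (volume_preserving_finTwoArrow ℝ).comp
      (EuclideanSpace.volume_preserving_symm_measurableEquiv_toLp (Fin 2))
  set C : Set (ℝ × ℝ) := {p | |p.1| ^ s < |p.2|}
  have hC : MeasurableSet C := measurableSet_lt (by fun_prop) (by fun_prop)
  have hH : Measurable (C.indicator fun p => F |p.2|) :=
    (hF.comp measurable_snd.abs).indicator hC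
  have hslice (y : ℝ) : ∫⁻ x, C.indicator (fun p => F |p.2|) (x, y) =
      F |y| * ENNReal.ofReal (2 * |y| ^ s⁻¹) := by
    rw [← volume_abs_rpow_lt hs (abs_nonneg y), ← lintegral_indicator_const]
    · rfl
    · exact measurableSet_lt (by fun_prop) measurable_const
  calc ∫⁻ z in cuspSet s, F |z 1|
      = ∫⁻ p : ℝ × ℝ, C.indicator (fun p => F |p.2|) p := by
        rw [← lintegral_indicator (measurableSet_cuspSet s)]
        exact hcoord.lintegral_comp hH
    _ = ∫⁻ y, F |y| * ENNReal.ofReal (2 * |y| ^ s⁻¹) := by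
        rw [Measure.volume_eq_prod, lintegral_prod_symm _ hH.aemeasurable]
        exact lintegral_congr hslice
    _ = 4 * ∫⁻ t in Ioi 0, F t * ENNReal.ofReal (t ^ s⁻¹) := by
        rw [lintegral_comp_abs_eq_two_mul (fun t => F t * ENNReal.ofReal (2 * t ^ s⁻¹)),
          show (4 : ℝ≥0∞) = 2 * 2 by norm_num, mul_assoc]
        congr 1
        rw [← lintegral_const_mul' _ _ ofNat_ne_top]
        refine lintegral_congr fun t => ?_
        rw [ENNReal.ofReal_mul zero_le_two, ofReal_ofNat]
        ring

theorem setLIntegral_cuspSet_indicator_rpow {s : ℝ} (hs : 0 < s) {Y : Set ℝ}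
    (hY : MeasurableSet Y) (p : ℝ) :
    ∫⁻ z in cuspSet s, Y.indicator (fun t => ENNReal.ofReal (t ^ p)) |z 1|
      = 4 * ∫⁻ t in Y ∩ Ioi 0, ENNReal.ofReal (t ^ (p + s⁻¹)) := by
  have hF : Measurable (Y.indicator fun t : ℝ => ENNReal.ofReal (t ^ p)) :=
    (by fun_prop : Measurable fun t : ℝ => ENNReal.ofReal (t ^ p)).indicator hY
  rw [setLIntegral_cuspSet_comp_abs hs hF, ← Measure.restrict_restrict hY,
    ← lintegral_indicator hY]
  congr 1
  refine setLIntegral_congr_fun measurableSet_Ioi fun t ht => ?_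
  by_cases htY : t ∈ Y
  · simp only [indicator_of_mem htY]
    rw [← ENNReal.ofReal_mul (Real.rpow_nonneg ht.le p), Real.rpow_add ht]
  · simp only [indicator_of_notMem htY, zero_mul]

theorem muCusp_eq_withDensity_restrict (α s : ℝ) :
    muCusp α s = (volume.restrict (cuspSet s)).withDensity
      fun z => ENNReal.ofReal (‖z‖ ^ (-(2 : ℝ) - α)) :=
  withDensity_indicator (measurableSet_cuspSet s) _

theorem lintegral_muCusp (α s : ℝ) {g : EuclideanSpace ℝ (Fin 2) → ℝ≥0∞} (hg : Measurable g) :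
    ∫⁻ z, g z ∂muCusp α s
      = ∫⁻ z in cuspSet s, ENNReal.ofReal (‖z‖ ^ (-(2 : ℝ) - α)) * g z := by
  rw [muCusp_eq_withDensity_restrict, lintegral_withDensity_eq_lintegral_mul _ (by fun_prop) hg]
  rfl

theorem setLIntegral_sq_norm_muCusp_le {α s ρ : ℝ} (hα : 0 ≤ α) (hs : 0 < s)
    (hβ : α + 1 - s⁻¹ < 2) (hρ : 0 ≤ ρ) :
    ∫⁻ z in {z : EuclideanSpace ℝ (Fin 2) | ‖z‖ ≤ ρ}, ENNReal.ofReal (‖z‖ ^ 2) ∂muCusp α s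
      ≤ 4 * ENNReal.ofReal (ρ ^ (2 - (α + 1 - s⁻¹)) / (2 - (α + 1 - s⁻¹))) := by
  set B := {z : EuclideanSpace ℝ (Fin 2) | ‖z‖ ≤ ρ}
  have hB : MeasurableSet B := measurableSet_le measurable_norm measurable_const
  have hpt : ∀ z ∈ cuspSet s,
      ENNReal.ofReal (‖z‖ ^ (-(2 : ℝ) - α)) * B.indicator (fun z => ENNReal.ofReal (‖z‖ ^ 2)) z
        ≤ (Iic ρ).indicator (fun t => ENNReal.ofReal (t ^ (-α))) |z 1| := by
    intro z hz
    by_cases hzB : z ∈ B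
    · have hz1 := abs_apply_one_pos_of_mem_cuspSet hz
      have hz1z : |z 1| ≤ ‖z‖ := abs_apply_le_norm z 1
      rw [indicator_of_mem hzB, indicator_of_mem (show |z 1| ∈ Iic ρ from hz1z.trans hzB),
        ← ENNReal.ofReal_mul (by positivity), ← Real.rpow_natCast,
        ← Real.rpow_add (hz1.trans_le hz1z)]
      refine ENNReal.ofReal_le_ofReal ?_
      calc ‖z‖ ^ (-(2 : ℝ) - α + (2 : ℕ)) = ‖z‖ ^ (-α) := by norm_num; ring_nf
        _ ≤ |z 1| ^ (-α) := Real.rpow_le_rpow_of_nonpos hz1 hz1z (by linarith)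
    · simp [indicator_of_notMem hzB]
  calc ∫⁻ z in B, ENNReal.ofReal (‖z‖ ^ 2) ∂muCusp α s
      = ∫⁻ z in cuspSet s, ENNReal.ofReal (‖z‖ ^ (-(2 : ℝ) - α))
          * B.indicator (fun z => ENNReal.ofReal (‖z‖ ^ 2)) z := by
        rw [← lintegral_indicator hB, lintegral_muCusp α s (by fun_prop)]
    _ ≤ ∫⁻ z in cuspSet s, (Iic ρ).indicator (fun t => ENNReal.ofReal (t ^ (-α))) |z 1| :=
        setLIntegral_mono' (measurableSet_cuspSet s) hpt
    _ = 4 * ENNReal.ofReal (ρ ^ (2 - (α + 1 - s⁻¹)) / (2 - (α + 1 - s⁻¹))) := by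
        rw [setLIntegral_cuspSet_indicator_rpow hs measurableSet_Iic, Iic_inter_Ioi,
          lintegral_Ioc_rpow (by linarith) hρ, show -α + s⁻¹ + 1 = 2 - (α + 1 - s⁻¹) by ring]

theorem muCusp_annulus_le {α s ρ : ℝ} (hs : 0 < s) (hs1 : s ≤ 1) (hβ : 0 < α + 1 - s⁻¹)
    (hρ : 0 < ρ) :
    muCusp α s {z : EuclideanSpace ℝ (Fin 2) | ρ < ‖z‖ ∧ ‖z‖ ≤ 1}
      ≤ 4 * ENNReal.ofReal ((ρ / 2) ^ (-(α + 1 - s⁻¹)) / (α + 1 - s⁻¹)) := by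
  set A := {z : EuclideanSpace ℝ (Fin 2) | ρ < ‖z‖ ∧ ‖z‖ ≤ 1}
  have hA : MeasurableSet A :=
    (measurableSet_lt measurable_const measurable_norm).inter
      (measurableSet_le measurable_norm measurable_const)
  have hα : 0 ≤ α := by linarith [one_le_inv_iff₀.mpr ⟨hs, hs1⟩]
  have hpt : ∀ z ∈ cuspSet s, ENNReal.ofReal (‖z‖ ^ (-(2 : ℝ) - α)) * A.indicator 1 z
      ≤ (Ioi (ρ / 2)).indicator (fun t => ENNReal.ofReal (t ^ (-(2 : ℝ) - α))) |z 1| := by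
    intro z hz
    by_cases hzA : z ∈ A
    · have hz1 := abs_apply_one_pos_of_mem_cuspSet hz
      have hz2 := norm_lt_two_mul_abs_of_mem_cuspSet hs1 hz hzA.2
      rw [indicator_of_mem hzA, indicator_of_mem (show |z 1| ∈ Ioi (ρ / 2) by
        simp only [mem_Ioi]; linarith [hzA.1]), Pi.one_apply, mul_one]
      exact ENNReal.ofReal_le_ofReal
        (Real.rpow_le_rpow_of_nonpos hz1 (abs_apply_le_norm z 1) (by linarith))
    · simp [indicator_of_notMem hzA]
  calc muCusp α s A
      = ∫⁻ z in cuspSet s, ENNReal.ofReal (‖z‖ ^ (-(2 : ℝ) - α)) * A.indicator 1 z := by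
        rw [← lintegral_indicator_one hA, lintegral_muCusp α s (measurable_one.indicator hA)]
    _ ≤ ∫⁻ z in cuspSet s,
          (Ioi (ρ / 2)).indicator (fun t => ENNReal.ofReal (t ^ (-(2 : ℝ) - α))) |z 1| :=
        setLIntegral_mono' (measurableSet_cuspSet s) hpt
    _ = 4 * ENNReal.ofReal ((ρ / 2) ^ (-(α + 1 - s⁻¹)) / (α + 1 - s⁻¹)) := by
        rw [setLIntegral_cuspSet_indicator_rpow hs measurableSet_Ioi, Ioi_inter_Ioi,
          max_eq_left (by positivity), lintegral_Ioi_rpow (by linarith) (by positivity),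
          show -(2 : ℝ) - α + s⁻¹ + 1 = -(α + 1 - s⁻¹) by ring, neg_div_neg_eq]

theorem muCusp_K1 (α s : ℝ) (hα : 0 < α) (hα2 : α < 2) (hs0 : 0 < s) (hs1 : s < 1)
    (hβ : 0 < α + 1 - 1 / s) :
    ∃ Λ : ℝ, 1 ≤ Λ ∧ ∀ ρ : ℝ, 0 < ρ → ρ ≤ 1 →
      ENNReal.ofReal (ρ ^ (-2 : ℝ)) *
          ∫⁻ z in {z : EuclideanSpace ℝ (Fin 2) | ‖z‖ ≤ ρ},
            ENNReal.ofReal (‖z‖ ^ 2) ∂(muCusp α s)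
        + muCusp α s {z : EuclideanSpace ℝ (Fin 2) | ρ < ‖z‖ ∧ ‖z‖ ≤ 1}
        ≤ ENNReal.ofReal (Λ * ρ ^ (-(α + 1 - 1 / s))) := by
  rw [one_div] at hβ ⊢
  set β := α + 1 - s⁻¹
  have hβ2 : β < 2 := by linarith [one_lt_inv₀ hs0 |>.mpr hs1]
  refine ⟨4 / (2 - β) + 4 * 2 ^ β / β, ?_, fun ρ hρ _ => ?_⟩
  · have : 1 ≤ 4 / (2 - β) := by rw [le_div_iff₀ (by linarith)]; linarith
    have : 0 ≤ 4 * 2 ^ β / β := by positivity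
    linarith
  have hscale : ρ ^ (-2 : ℝ) * ρ ^ (2 - β) = ρ ^ (-β) := by
    rw [← Real.rpow_add hρ]; ring_nf
  have hhalf : (ρ / 2) ^ (-β) = 2 ^ β * ρ ^ (-β) := by
    rw [Real.div_rpow hρ.le zero_le_two, Real.rpow_neg zero_le_two, div_eq_mul_inv, inv_inv,
      mul_comm]
  calc _ ≤ ENNReal.ofReal (ρ ^ (-2 : ℝ)) * (4 * ENNReal.ofReal (ρ ^ (2 - β) / (2 - β)))
          + 4 * ENNReal.ofReal ((ρ / 2) ^ (-β) / β) :=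
        add_le_add (mul_le_mul_right (setLIntegral_sq_norm_muCusp_le hα.le hs0 hβ2 hρ.le) _)
          (muCusp_annulus_le hs0 hs1.le hβ hρ)
    _ = ENNReal.ofReal ((4 / (2 - β) + 4 * 2 ^ β / β) * ρ ^ (-β)) := by
        have h2β : 0 < 2 - β := by linarith
        rw [← ofReal_ofNat 4, ← ENNReal.ofReal_mul (by norm_num),
          ← ENNReal.ofReal_mul (by positivity), ← ENNReal.ofReal_mul (by norm_num),
          ← ENNReal.ofReal_add (by positivity) (by positivity), hhalf, ← hscale]
        congr 1
        field_simp
end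

section
/- For all positive real numbers a, b and s, t > 0: (b - a)(s²/a - t²/b) ≥ st(log(b/t) - log(a/s))² - 3(t - s)². -/
/-!
With `x = (b / t) / (a / s)`, the left-hand side equals `s t (x - 2 + 1/x) + 2 s t - s² - t²`,
and the log term is `s t (log x)²`. So it suffices that `(log x)² ≤ x - 2 + 1/x`, which after
`x = exp (2u)` is `u² ≤ sinh² u`; the remaining `-(t - s)²` is absorbed by `-3 (t - s)²`.
-/

open Real

lemma Real.sq_le_sinh_sq (u : ℝ) : u ^ 2 ≤ sinh u ^ 2 := by
  rw [← sq_abs u, ← sq_abs (sinh u), abs_sinh]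
  exact pow_le_pow_left₀ (abs_nonneg u) (self_le_sinh_iff.mpr (abs_nonneg u)) 2

lemma Real.exp_two_mul_sub_two_add_inv (u : ℝ) :
    exp (2 * u) - 2 + (exp (2 * u))⁻¹ = 4 * sinh u ^ 2 := by
  rw [sinh_eq, exp_neg, two_mul, exp_add]
  field_simp
  ring

lemma Real.log_sq_le_sub_two_add_inv {x : ℝ} (hx : 0 < x) : log x ^ 2 ≤ x - 2 + x⁻¹ := by
  obtain ⟨u, rfl⟩ : ∃ u, x = exp (2 * u) :=
    ⟨log x / 2, by rw [mul_div_cancel₀ _ two_ne_zero, exp_log hx]⟩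
  rw [log_exp, exp_two_mul_sub_two_add_inv]
  nlinarith [sq_le_sinh_sq u]

theorem log_pointwise_ineq (a b s t : ℝ) (ha : 0 < a) (hb : 0 < b) (hs : 0 < s) (ht : 0 < t) :
    (b - a) * (s ^ 2 / a - t ^ 2 / b) ≥
      s * t * (Real.log (b / t) - Real.log (a / s)) ^ 2 - 3 * (t - s) ^ 2 := by
  set x := (b / t) / (a / s)
  have hlog : log (b / t) - log (a / s) = log x := (log_div (by positivity) (by positivity)).symm
  have hkey : s * t * log x ^ 2 ≤ s * t * (x - 2 + x⁻¹) :=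
    mul_le_mul_of_nonneg_left (log_sq_le_sub_two_add_inv (by positivity)) (by positivity)
  have hexpand : (b - a) * (s ^ 2 / a - t ^ 2 / b) =
      s * t * (x - 2 + x⁻¹) + 2 * s * t - s ^ 2 - t ^ 2 := by
    simp only [x]
    field_simp
    ring
  rw [hlog, hexpand]
  nlinarith [sq_nonneg (t - s)]
end
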